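/- arXiv:1605.06349 — 4 statements merged into one kernel-verified Lean document; each statement's English description precedes it below -/
import Mathlib

section
/- Suppose Σ_{n≥1} E|Z_n − Z_{n−1}| < ∞. Then the randomized estimator Z̃ = (Z_N − Z_{N−1})/p_N is integrable and E[Z̃] = Σ_{n≥1} E[Z_n − Z_{n−1}] = lim_{n→∞} E[Z_n]. In other words, Z̃ is an unbiased estimator of the limit of the means of the Z_n. -/
open MeasureTheory Filter Topology

/-!
Split `Ω` into the fibres `{N = n}`. On `{N = n}` the estimator equals
`(Z n - Z (n - 1)) / p n`, a function of the process alone, so by independence its integral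
over the fibre is `P(N = n) · E[Z n - Z (n - 1)] / p n = E[Z n - Z (n - 1)]`; the same
computation with absolute values turns `∑ E|Z n - Z (n - 1)| < ∞` into summability of the
fibrewise integrals of the norm. Countable additivity of the integral then gives
integrability and `E[Z̃] = ∑ E[Z n - Z (n - 1)]`, and the partial sums of this series
telescope to `E[Z n]`.
-/

section Fiber

variable {Ω ι E : Type*} [MeasurableSpace Ω] {μ : Measure Ω} [MeasurableSpace ι]
  [MeasurableSingletonClass ι] [NormedAddCommGroup E] {N : Ω → ι} {Y : ι → Ω → E}

theorem setIntegral_fiber_eq [NormedSpace ℝ E] (hN : Measurable N) (i : ι) :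
    ∫ ω in N ⁻¹' {i}, Y (N ω) ω ∂μ = ∫ ω in N ⁻¹' {i}, Y i ω ∂μ :=
  setIntegral_congr_fun (hN (measurableSet_singleton i)) fun ω hω => by rw [hω]

theorem integrable_of_summable_setIntegral_norm_fiber [Countable ι] (hN : Measurable N)
    (hY : ∀ i, IntegrableOn (Y i) (N ⁻¹' {i}) μ)
    (hsum : Summable fun i => ∫ ω in N ⁻¹' {i}, ‖Y i ω‖ ∂μ) :
    Integrable (fun ω => Y (N ω) ω) μ := by
  have hfiber : ∀ i, IntegrableOn (fun ω => Y (N ω) ω) (N ⁻¹' {i}) μ := fun i =>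
    (hY i).congr_fun (fun ω hω => by rw [hω]) (hN (measurableSet_singleton i))
  have hnorm : ∀ i, ∫ ω in N ⁻¹' {i}, ‖Y (N ω) ω‖ ∂μ = ∫ ω in N ⁻¹' {i}, ‖Y i ω‖ ∂μ :=
    setIntegral_fiber_eq (Y := fun i ω => ‖Y i ω‖) hN
  simpa [← Set.preimage_iUnion, Set.iUnion_of_singleton] using
    integrableOn_iUnion_of_summable_integral_norm hfiber (by simpa only [hnorm] using hsum)

theorem hasSum_setIntegral_fiber [Countable ι] [NormedSpace ℝ E] (hN : Measurable N)
    (hY : ∀ i, IntegrableOn (Y i) (N ⁻¹' {i}) μ)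
    (hsum : Summable fun i => ∫ ω in N ⁻¹' {i}, ‖Y i ω‖ ∂μ) :
    HasSum (fun i => ∫ ω in N ⁻¹' {i}, Y i ω ∂μ) (∫ ω, Y (N ω) ω ∂μ) := by
  have h := hasSum_integral_iUnion (fun i => hN (measurableSet_singleton i))
    (pairwise_disjoint_fiber N)
    (integrable_of_summable_setIntegral_norm_fiber hN hY hsum).integrableOn
  simpa [← Set.preimage_iUnion, Set.iUnion_of_singleton, setIntegral_fiber_eq hN] using h

end Fiber

theorem ProbabilityTheory.IndepFun.setIntegral_preimage_eq_mul {Ω ι β : Type*}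
    [MeasurableSpace Ω] [MeasurableSpace ι] [MeasurableSpace β] {P : Measure Ω}
    {N : Ω → ι} {X : Ω → β} (hNX : IndepFun N X P) (hN : Measurable N) (hX : AEMeasurable X P)
    {f : β → ℝ} (hf : Measurable f) {s : Set ι} (hs : MeasurableSet s) :
    ∫ ω in N ⁻¹' s, f (X ω) ∂P = P.real (N ⁻¹' s) * ∫ ω, f (X ω) ∂P :=
  ((IndepFun_iff_Indep N X P).1 hNX).setIntegral_eq_mul hN.comap_le hX ⟨s, hs, rfl⟩
    hf.aestronglyMeasurable

theorem HasSum.tendsto_of_sub {G : Type*} [AddCommGroup G] [TopologicalSpace G]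
    [ContinuousAdd G] {u : ℕ → G} {a : G} (h : HasSum (fun n => u (n + 1) - u n) a) :
    Tendsto u atTop (𝓝 (u 0 + a)) := by
  have := (tendsto_const_nhds (x := u 0)).add h.tendsto_sum_nat
  simp only [Finset.sum_range_sub, add_sub_cancel] at this
  exact this

-- `n - 1` truncates: for `n = 0` the increment is `Z 0 - Z 0` and both sides vanish.
theorem setIntegral_fiber_increment_div {Ω : Type*} [MeasurableSpace Ω] {P : Measure Ω}
    {Z : ℕ → Ω → ℝ} {N : Ω → ℕ} {p : ℕ → ℝ} (hint : ∀ n, Integrable (Z n) P)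
    (hNmeas : Measurable N) (hp : ∀ n, p n = (P {ω | N ω = n}).toReal)
    (hppos : ∀ n, 1 ≤ n → 0 < p n)
    (hindep : ProbabilityTheory.IndepFun N (fun ω => fun n => Z n ω) P)
    (φ : ℝ → ℝ) (hφ : Measurable φ) (hφ0 : φ 0 = 0) (n : ℕ) :
    ∫ ω in N ⁻¹' {n}, φ (Z n ω - Z (n - 1) ω) / p n ∂P
      = ∫ ω, φ (Z n ω - Z (n - 1) ω) ∂P := by
  rcases n with _ | n
  · simp [hφ0]
  have hX : AEMeasurable (fun ω n => Z n ω) P :=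
    aemeasurable_pi_lambda _ fun n => (hint n).aemeasurable
  have hsplit := hindep.setIntegral_preimage_eq_mul hNmeas hX
    (f := fun v => φ (v (n + 1) - v n) / p (n + 1)) (by fun_prop) (measurableSet_singleton (n + 1))
  have hpN : P.real (N ⁻¹' {n + 1}) = p (n + 1) := (hp _).symm
  simp only [add_tsub_cancel_right] at hsplit ⊢
  rw [hsplit, integral_div, hpN, mul_div_cancel₀ _ (hppos _ le_add_self).ne']

theorem randomized_estimator_unbiased_general {Ω : Type*} [MeasurableSpace Ω] (P : Measure Ω)
    (Z : ℕ → Ω → ℝ) (N : Ω → ℕ) (p : ℕ → ℝ)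
    (hZ0 : Z 0 = 0)
    (hint : ∀ n, Integrable (Z n) P)
    (hNmeas : Measurable N)
    (hp : ∀ n, p n = (P {ω | N ω = n}).toReal)
    (hppos : ∀ n, 1 ≤ n → 0 < p n)
    (hindep : ProbabilityTheory.IndepFun N (fun ω => fun n => Z n ω) P)
    (hsum : Summable fun n : ℕ => ∫ ω, |Z (n + 1) ω - Z n ω| ∂P) :
    Integrable (fun ω => (Z (N ω) ω - Z (N ω - 1) ω) / p (N ω)) P ∧
      (∫ ω, (Z (N ω) ω - Z (N ω - 1) ω) / p (N ω) ∂P)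
        = ∑' n : ℕ, ∫ ω, (Z (n + 1) ω - Z n ω) ∂P ∧
      Tendsto (fun n => ∫ ω, Z n ω ∂P) atTop
        (𝓝 (∫ ω, (Z (N ω) ω - Z (N ω - 1) ω) / p (N ω) ∂P)) := by
  have hfiber := setIntegral_fiber_increment_div hint hNmeas hp hppos hindep
  have hYint : ∀ n, IntegrableOn (fun ω => (Z n ω - Z (n - 1) ω) / p n) (N ⁻¹' {n}) P :=
    fun n => (((hint n).sub (hint (n - 1))).div_const _).integrableOn
  have hnorm : ∀ n ω, ‖(Z n ω - Z (n - 1) ω) / p n‖ = |Z n ω - Z (n - 1) ω| / p n := by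
    intro n ω
    have hp_nonneg : 0 ≤ p n := by rw [hp n]; exact ENNReal.toReal_nonneg
    rw [norm_div, Real.norm_eq_abs, Real.norm_of_nonneg hp_nonneg]
  have hnorm_sum : Summable fun n => ∫ ω in N ⁻¹' {n}, ‖(Z n ω - Z (n - 1) ω) / p n‖ ∂P := by
    simp only [hnorm, hfiber _ continuous_abs.measurable abs_zero]
    exact (summable_nat_add_iff 1).1 (by simpa using hsum)
  have hS : HasSum (fun n => ∫ ω, (Z n ω - Z (n - 1) ω) ∂P)
      (∫ ω, (Z (N ω) ω - Z (N ω - 1) ω) / p (N ω) ∂P) := by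
    have hfiber_id : ∀ n, ∫ ω in N ⁻¹' {n}, (Z n ω - Z (n - 1) ω) / p n ∂P
        = ∫ ω, (Z n ω - Z (n - 1) ω) ∂P := hfiber id measurable_id rfl
    simpa only [hfiber_id] using hasSum_setIntegral_fiber hNmeas hYint hnorm_sum
  have hshift : HasSum (fun n => ∫ ω, (Z (n + 1) ω - Z n ω) ∂P)
      (∫ ω, (Z (N ω) ω - Z (N ω - 1) ω) / p (N ω) ∂P) := by
    simpa only [add_tsub_cancel_right, Finset.range_one, Finset.sum_singleton, zero_tsub, sub_self,
      integral_zero, sub_zero] using (hasSum_nat_add_iff' 1).2 hS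
  have hmeans : HasSum (fun n => ∫ ω, Z (n + 1) ω ∂P - ∫ ω, Z n ω ∂P)
      (∫ ω, (Z (N ω) ω - Z (N ω - 1) ω) / p (N ω) ∂P) := by
    simpa only [integral_sub (hint _) (hint _)] using hshift
  refine ⟨integrable_of_summable_setIntegral_norm_fiber hNmeas hYint hnorm_sum,
    hshift.tsum_eq.symm, ?_⟩
  simpa only [hZ0, Pi.zero_apply, integral_zero, zero_add] using
    hmeans.tendsto_of_sub (u := fun n => ∫ ω, Z n ω ∂P)

/-- The single-term randomized multilevel estimator `Z̃ = (Z_N − Z_{N−1}) / p_N`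
is integrable and unbiased for `∑_{n≥1} E[Z n − Z (n−1)] = lim_n E[Z n]`,
provided `∑_{n≥1} E|Z n − Z (n−1)| < ∞`. -/
theorem randomized_estimator_unbiased {Ω : Type*} [MeasurableSpace Ω] (P : Measure Ω)
    [IsProbabilityMeasure P] (Z : ℕ → Ω → ℝ) (N : Ω → ℕ) (p : ℕ → ℝ)
    (hZ0 : Z 0 = 0)
    (hint : ∀ n, Integrable (Z n) P)
    (hZmeas : ∀ n, Measurable (Z n))
    (hNmeas : Measurable N)
    (hN1 : ∀ ω, 1 ≤ N ω)
    (hp : ∀ n, p n = (P {ω | N ω = n}).toReal)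
    (hppos : ∀ n, 1 ≤ n → 0 < p n)
    (hindep : ProbabilityTheory.IndepFun N (fun ω => fun n => Z n ω) P)
    (hsum : Summable fun n : ℕ => ∫ ω, |Z (n + 1) ω - Z n ω| ∂P) :
    Integrable (fun ω => (Z (N ω) ω - Z (N ω - 1) ω) / p (N ω)) P ∧
      (∫ ω, (Z (N ω) ω - Z (N ω - 1) ω) / p (N ω) ∂P)
        = ∑' n : ℕ, ∫ ω, (Z (n + 1) ω - Z n ω) ∂P ∧
      Tendsto (fun n => ∫ ω, Z n ω ∂P) atTop
        (𝓝 (∫ ω, (Z (N ω) ω - Z (N ω - 1) ω) / p (N ω) ∂P)) :=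
  randomized_estimator_unbiased_general P Z N p hZ0 hint hNmeas hp hppos hindep hsum
end

section
/- The second moment of the randomized estimator satisfies the identity E[Z̃²] = Σ_{n≥1} E[(Z_n − Z_{n−1})²]/p_n, where both sides are understood as values in [0, ∞] (the identity holds whether or not the two sides are finite). -/
open MeasureTheory

open scoped ENNReal

/-! Split `Ω` along the fibres `{N = n}`, `n ≥ 1`. On `{N = n}` the estimator is
`(Z n - Z (n - 1)) / p n`, and as `N` is independent of `Z`, the integral of its square over the
fibre is `P {N = n} * E[(Z n - Z (n - 1))²] / p n² = E[(Z n - Z (n - 1))²] / p n`. -/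

theorem lintegral_eq_tsum_setLIntegral_fiber {Ω α : Type*} [MeasurableSpace Ω] [MeasurableSpace α]
    [Countable α] [MeasurableSingletonClass α] {μ : Measure Ω} {N : Ω → α} (hN : Measurable N)
    (f : Ω → ℝ≥0∞) :
    ∫⁻ ω, f ω ∂μ = ∑' a, ∫⁻ ω in N ⁻¹' {a}, f ω ∂μ := by
  rw [← lintegral_iUnion (fun a => hN (measurableSet_singleton a)) (pairwise_disjoint_fiber N),
    ← Set.preimage_iUnion, Set.iUnion_of_singleton, Set.preimage_univ, Measure.restrict_univ]

theorem ProbabilityTheory.IndepFun.setLIntegral_preimage_eq_mul {Ω α β : Type*}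
    [MeasurableSpace Ω] [MeasurableSpace α] [MeasurableSpace β] {μ : Measure Ω}
    {N : Ω → α} {X : Ω → β} (hind : IndepFun N X μ) (hN : Measurable N) (hX : AEMeasurable X μ)
    {s : Set α} (hs : MeasurableSet s) {f : β → ℝ≥0∞} (hf : Measurable f) :
    ∫⁻ ω in N ⁻¹' s, f (X ω) ∂μ = μ (N ⁻¹' s) * ∫⁻ ω, f (X ω) ∂μ := by
  have hind' : IndepFun (s.indicator (1 : α → ℝ≥0∞) ∘ N) (f ∘ X) μ :=
    hind.comp (measurable_one.indicator hs) hf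
  have hfiber : (N ⁻¹' s).indicator (fun ω => f (X ω)) = fun ω => s.indicator 1 (N ω) * f (X ω) := by
    ext ω
    by_cases hω : N ω ∈ s <;> simp [hω]
  rw [← lintegral_indicator (hN hs), hfiber]
  refine (lintegral_mul_eq_lintegral_mul_lintegral_of_indepFun''
    ((measurable_one.indicator hs).comp hN).aemeasurable (hf.comp_aemeasurable hX) hind').trans ?_
  rw [← lintegral_indicator_one (hN hs)]
  rfl

theorem ENNReal.ofReal_div_sq {x c : ℝ} (hc : 0 < c) :
    ENNReal.ofReal ((x / c) ^ 2) = ENNReal.ofReal (x ^ 2) / ENNReal.ofReal c ^ 2 := by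
  rw [div_pow, ENNReal.ofReal_div_of_pos (pow_pos hc 2), ENNReal.ofReal_pow hc.le]

theorem setLIntegral_fiber_estimator_sq {Ω : Type*} [MeasurableSpace Ω] {P : Measure Ω}
    {Z : ℕ → Ω → ℝ} {N : Ω → ℕ} {p : ℕ → ℝ} (hZmeas : ∀ n, Measurable (Z n))
    (hNmeas : Measurable N) (hindep : ProbabilityTheory.IndepFun N (fun ω => fun n => Z n ω) P)
    {n : ℕ} (hpn : p (n + 1) = (P {ω | N ω = n + 1}).toReal) (hpos : 0 < p (n + 1)) :
    ∫⁻ ω in N ⁻¹' {n + 1}, ENNReal.ofReal (((Z (N ω) ω - Z (N ω - 1) ω) / p (N ω)) ^ 2) ∂P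
      = (∫⁻ ω, ENNReal.ofReal ((Z (n + 1) ω - Z n ω) ^ 2) ∂P) / P {ω | N ω = n + 1} := by
  set q := P {ω | N ω = n + 1}
  obtain ⟨hq0, hq_top⟩ := ENNReal.toReal_pos_iff.mp (hpn ▸ hpos)
  have hq : ENNReal.ofReal (p (n + 1)) = q := by
    rw [hpn, ENNReal.ofReal_toReal hq_top.ne]
  have hfiber : MeasurableSet (N ⁻¹' {n + 1}) := hNmeas (measurableSet_singleton _)
  let D : (ℕ → ℝ) → ℝ≥0∞ := fun x => ENNReal.ofReal ((x (n + 1) - x n) ^ 2)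
  have hD : Measurable D := by fun_prop
  calc ∫⁻ ω in N ⁻¹' {n + 1}, ENNReal.ofReal (((Z (N ω) ω - Z (N ω - 1) ω) / p (N ω)) ^ 2) ∂P
      = ∫⁻ ω in N ⁻¹' {n + 1}, D (fun k => Z k ω) * (q ^ 2)⁻¹ ∂P := by
        refine setLIntegral_congr_fun hfiber fun ω (hω : N ω = n + 1) => ?_
        rw [hω, Nat.add_sub_cancel, ENNReal.ofReal_div_sq hpos, hq, div_eq_mul_inv]
    _ = q * (∫⁻ ω, D (fun k => Z k ω) ∂P) * (q ^ 2)⁻¹ := by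
        rw [lintegral_mul_const (f := fun ω => D (fun k => Z k ω)) _
            (hD.comp (measurable_pi_lambda _ hZmeas)),
          hindep.setLIntegral_preimage_eq_mul hNmeas (measurable_pi_lambda _ hZmeas).aemeasurable
            (measurableSet_singleton _) hD]
        rfl
    _ = (∫⁻ ω, D (fun k => Z k ω) ∂P) / q := by
        rw [← div_eq_mul_inv, sq, ENNReal.mul_div_mul_left _ _ hq0.ne' hq_top.ne]

theorem randomized_estimator_second_moment_general {Ω : Type*} [MeasurableSpace Ω] (P : Measure Ω)
    (Z : ℕ → Ω → ℝ) (N : Ω → ℕ) (p : ℕ → ℝ)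
    (hZmeas : ∀ n, Measurable (Z n))
    (hNmeas : Measurable N)
    (hN1 : ∀ ω, 1 ≤ N ω)
    (hp : ∀ n, p n = (P {ω | N ω = n}).toReal)
    (hppos : ∀ n, 1 ≤ n → 0 < p n)
    (hindep : ProbabilityTheory.IndepFun N (fun ω => fun n => Z n ω) P) :
    (∫⁻ ω, ENNReal.ofReal (((Z (N ω) ω - Z (N ω - 1) ω) / p (N ω)) ^ 2) ∂P)
      = ∑' n : ℕ,
          (∫⁻ ω, ENNReal.ofReal ((Z (n + 1) ω - Z n ω) ^ 2) ∂P)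
            / P {ω | N ω = n + 1} := by
  have hfiber_zero : N ⁻¹' {0} = ∅ :=
    Set.eq_empty_of_forall_notMem fun ω (hω : N ω = 0) => by have := hN1 ω; omega
  rw [lintegral_eq_tsum_setLIntegral_fiber hNmeas, tsum_eq_zero_add' ENNReal.summable, hfiber_zero,
    Measure.restrict_empty, lintegral_zero_measure, zero_add]
  exact tsum_congr fun n =>
    setLIntegral_fiber_estimator_sq hZmeas hNmeas hindep (hp _) (hppos _ (Nat.le_add_left 1 n))

/-- Second-moment identity for the randomized multilevel estimator:
`E[Z̃²] = ∑_{n≥1} E[(Z n − Z (n−1))²] / p n`, as an identity in `[0, ∞]`. -/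
theorem randomized_estimator_second_moment {Ω : Type*} [MeasurableSpace Ω] (P : Measure Ω)
    [IsProbabilityMeasure P] (Z : ℕ → Ω → ℝ) (N : Ω → ℕ) (p : ℕ → ℝ)
    (hZ0 : Z 0 = 0)
    (hint : ∀ n, Integrable (Z n) P)
    (hZmeas : ∀ n, Measurable (Z n))
    (hNmeas : Measurable N)
    (hN1 : ∀ ω, 1 ≤ N ω)
    (hp : ∀ n, p n = (P {ω | N ω = n}).toReal)
    (hppos : ∀ n, 1 ≤ n → 0 < p n)
    (hindep : ProbabilityTheory.IndepFun N (fun ω => fun n => Z n ω) P) :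
    (∫⁻ ω, ENNReal.ofReal (((Z (N ω) ω - Z (N ω - 1) ω) / p (N ω)) ^ 2) ∂P)
      = ∑' n : ℕ,
          (∫⁻ ω, ENNReal.ofReal ((Z (n + 1) ω - Z n ω) ^ 2) ∂P)
            / P {ω | N ω = n + 1} :=
  randomized_estimator_second_moment_general P Z N p hZmeas hNmeas hN1 hp hppos hindep
end

section
/- Suppose each Z_n is square integrable and Σ_{n≥1} E[(Z_n − Z_{n−1})²]/p_n < ∞. Then Z̃ is square integrable, Z̃ is integrable, the series Σ_{n≥1} E[Z_n − Z_{n−1}] converges absolutely, and E[Z̃] = Σ_{n≥1} E[Z_n − Z_{n−1}] = lim_{n→∞} E[Z_n]. Hence Z̃ is an unbiased estimator of lim_{n→∞} E[Z_n] with finite variance. -/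
/-!
Let `D n = Z (n + 1) - Z n`. On the event `{N = n + 1}` the estimator equals `D n / p (n + 1)`,
and by independence of `N` and `(Z n)` restricting to that event just multiplies expectations by
its probability `p (n + 1)`. Summing over `n` gives `E[Z̃²] = ∑ E[D n²] / p (n + 1) < ∞` and
`E[Z̃] = ∑ E[D n]`; the latter series converges absolutely because
`2 |E[D n]| ≤ E[D n²] / p (n + 1) + p (n + 1)` and `∑ p (n + 1) ≤ 1`, and it telescopes to
`lim E[Z n]` since `Z 0 = 0`.
-/

open MeasureTheory Filter Topology ProbabilityTheory

lemma iUnion_preimage_singleton {Ω α : Type*} (X : Ω → α) : ⋃ a, X ⁻¹' {a} = Set.univ := by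
  rw [← Set.preimage_iUnion, Set.iUnion_of_singleton, Set.preimage_univ]

section IndependentIndex

variable {Ω α β : Type*} [MeasurableSpace Ω] [MeasurableSpace α] [MeasurableSpace β]
  {P : Measure Ω} {X : Ω → α} {W : Ω → β} {g : α → β → ℝ}

lemma setIntegral_preimage_singleton_of_indepFun [MeasurableSingletonClass α]
    (hX : Measurable X) (hW : AEMeasurable W P) (hXW : IndepFun X W P)
    (hg : ∀ a, Measurable (g a)) (a : α) :
    ∫ ω in X ⁻¹' {a}, g (X ω) (W ω) ∂P = P.real (X ⁻¹' {a}) * ∫ ω, g a (W ω) ∂P := by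
  rw [setIntegral_congr_fun (hX (measurableSet_singleton a)) fun ω (hω : X ω = a) => by rw [hω]]
  exact Indep.setIntegral_eq_mul hX.comap_le hXW hW ⟨{a}, measurableSet_singleton a, rfl⟩
    (hg a).aestronglyMeasurable

variable [Countable α] [MeasurableSingletonClass α]

lemma integrable_comp_of_indepFun (hX : Measurable X) (hW : AEMeasurable W P)
    (hXW : IndepFun X W P) (hg : ∀ a, Measurable (g a))
    (hint : ∀ a, Integrable (fun ω => g a (W ω)) P)
    (hsum : Summable fun a => P.real (X ⁻¹' {a}) * ∫ ω, ‖g a (W ω)‖ ∂P) :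
    Integrable (fun ω => g (X ω) (W ω)) P := by
  rw [← integrableOn_univ, ← iUnion_preimage_singleton X]
  refine integrableOn_iUnion_of_summable_integral_norm (fun a => ?_) ?_
  · exact (hint a).integrableOn.congr_fun (fun ω (hω : X ω = a) => by rw [hω])
      (hX (measurableSet_singleton a))
  · exact hsum.congr fun a => (setIntegral_preimage_singleton_of_indepFun
      (g := fun a w => ‖g a w‖) hX hW hXW (fun a => (hg a).norm) a).symm

lemma memLp_two_comp_of_indepFun (hX : Measurable X) (hW : AEMeasurable W P)
    (hXW : IndepFun X W P) (hg : ∀ a, Measurable (g a))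
    (hL2 : ∀ a, MemLp (fun ω => g a (W ω)) 2 P)
    (hsum : Summable fun a => P.real (X ⁻¹' {a}) * ∫ ω, g a (W ω) ^ 2 ∂P) :
    MemLp (fun ω => g (X ω) (W ω)) 2 P := by
  have hmeas : AEMeasurable (fun ω => g (X ω) (W ω)) P :=
    (measurable_from_prod_countable_right (f := fun x : α × β => g x.1 x.2) hg).comp_aemeasurable
      (hX.aemeasurable.prodMk hW)
  refine (memLp_two_iff_integrable_sq hmeas.aestronglyMeasurable).2 ?_
  refine integrable_comp_of_indepFun (g := fun a w => g a w ^ 2) hX hW hXW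
    (fun a => (hg a).pow_const 2) (fun a => (hL2 a).integrable_sq) ?_
  simpa only [norm_pow, Real.norm_eq_abs, sq_abs] using hsum

lemma hasSum_integral_comp_of_indepFun (hX : Measurable X) (hW : AEMeasurable W P)
    (hXW : IndepFun X W P) (hg : ∀ a, Measurable (g a))
    (hint : Integrable (fun ω => g (X ω) (W ω)) P) :
    HasSum (fun a => P.real (X ⁻¹' {a}) * ∫ ω, g a (W ω) ∂P) (∫ ω, g (X ω) (W ω) ∂P) := by
  have h := hasSum_integral_iUnion (fun a => hX (measurableSet_singleton a))
    (pairwise_disjoint_fiber X) (by rw [iUnion_preimage_singleton]; exact hint.integrableOn)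
  rw [iUnion_preimage_singleton, setIntegral_univ] at h
  exact h.congr_fun fun a => (setIntegral_preimage_singleton_of_indepFun hX hW hXW hg a).symm

end IndependentIndex

section SecondMoment

variable {Ω : Type*} [MeasurableSpace Ω] {μ : Measure Ω} [IsProbabilityMeasure μ]

lemma two_mul_abs_integral_le_integral_sq_div_add {V : Ω → ℝ} (hV : MemLp V 2 μ) {q : ℝ}
    (hq : 0 < q) : 2 * |∫ ω, V ω ∂μ| ≤ (∫ ω, V ω ^ 2 ∂μ) / q + q := by
  have hsq : (∫ ω, V ω ∂μ) ^ 2 ≤ ∫ ω, V ω ^ 2 ∂μ := by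
    have := variance_nonneg V μ
    rw [variance_eq_sub hV] at this
    simpa [Pi.pow_apply] using this
  rw [div_add' _ _ _ hq.ne', le_div_iff₀ hq]
  nlinarith [sq_nonneg (|∫ ω, V ω ∂μ| - q), sq_abs (∫ ω, V ω ∂μ)]

lemma summable_abs_integral_of_summable_integral_sq_div {ι : Type*} {V : ι → Ω → ℝ}
    (hV : ∀ i, MemLp (V i) 2 μ) {q : ι → ℝ} (hq : ∀ i, 0 < q i) (hq_sum : Summable q)
    (hsum : Summable fun i => (∫ ω, V i ω ^ 2 ∂μ) / q i) :
    Summable fun i => |∫ ω, V i ω ∂μ| := by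
  refine .of_nonneg_of_le (fun i => abs_nonneg _) (fun i => ?_) ((hsum.add hq_sum).div_const 2)
  linarith [two_mul_abs_integral_le_integral_sq_div_add (hV i) (hq i)]

end SecondMoment

lemma tendsto_integral_of_hasSum_integral_sub {Ω : Type*} [MeasurableSpace Ω] {μ : Measure Ω}
    {Z : ℕ → Ω → ℝ} (hZ : ∀ n, Integrable (Z n) μ) {a : ℝ}
    (h : HasSum (fun n => ∫ ω, (Z (n + 1) ω - Z n ω) ∂μ) a) :
    Tendsto (fun n => ∫ ω, Z n ω ∂μ) atTop (𝓝 ((∫ ω, Z 0 ω ∂μ) + a)) := by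
  simp only [integral_sub (hZ _) (hZ _)] at h
  simpa only [Finset.sum_range_sub (fun n => ∫ ω, Z n ω ∂μ), add_sub_cancel] using
    h.tendsto_sum_nat.const_add (∫ ω, Z 0 ω ∂μ)

lemma preimage_sub_one_singleton {Ω : Type*} {N : Ω → ℕ} (hN : ∀ ω, 1 ≤ N ω) (n : ℕ) :
    (fun ω => N ω - 1) ⁻¹' {n} = {ω | N ω = n + 1} := by
  ext ω
  have := hN ω
  simp only [Set.mem_preimage, Set.mem_singleton_iff, Set.mem_ofPred_eq]
  omega

theorem randomized_estimator_finite_variance_unbiased_general {Ω : Type*} [MeasurableSpace Ω]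
    (P : Measure Ω) [IsProbabilityMeasure P] (Z : ℕ → Ω → ℝ) (N : Ω → ℕ) (p : ℕ → ℝ)
    (hZ0 : Z 0 = 0)
    (hL2 : ∀ n, MemLp (Z n) 2 P)
    (hNmeas : Measurable N)
    (hN1 : ∀ ω, 1 ≤ N ω)
    (hp : ∀ n, p n = (P {ω | N ω = n}).toReal)
    (hppos : ∀ n, 1 ≤ n → 0 < p n)
    (hindep : ProbabilityTheory.IndepFun N (fun ω => fun n => Z n ω) P)
    (hsum : Summable fun n : ℕ => (∫ ω, (Z (n + 1) ω - Z n ω) ^ 2 ∂P) / p (n + 1)) :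
    MemLp (fun ω => (Z (N ω) ω - Z (N ω - 1) ω) / p (N ω)) 2 P ∧
      Integrable (fun ω => (Z (N ω) ω - Z (N ω - 1) ω) / p (N ω)) P ∧
      (Summable fun n : ℕ => |∫ ω, (Z (n + 1) ω - Z n ω) ∂P|) ∧
      (∫ ω, (Z (N ω) ω - Z (N ω - 1) ω) / p (N ω) ∂P)
        = ∑' n : ℕ, ∫ ω, (Z (n + 1) ω - Z n ω) ∂P ∧
      Tendsto (fun n => ∫ ω, Z n ω ∂P) atTop
        (𝓝 (∫ ω, (Z (N ω) ω - Z (N ω - 1) ω) / p (N ω) ∂P)) := by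
  -- Reindex by `N - 1`, so that the fibre over `n` carries the increment `Z (n + 1) - Z n`.
  set X : Ω → ℕ := fun ω => N ω - 1
  set W : Ω → ℕ → ℝ := fun ω n => Z n ω
  set g : ℕ → (ℕ → ℝ) → ℝ := fun n w => (w (n + 1) - w n) / p (n + 1)
  have hY : (fun ω => (Z (N ω) ω - Z (N ω - 1) ω) / p (N ω)) = fun ω => g (X ω) (W ω) := by
    funext ω
    obtain ⟨n, hn⟩ : ∃ n, N ω = n + 1 := ⟨N ω - 1, by have := hN1 ω; omega⟩
    simp [g, X, W, hn]
  have hfiber : ∀ n, P.real (X ⁻¹' {n}) = p (n + 1) := fun n => by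
    rw [preimage_sub_one_singleton hN1, measureReal_def, hp]
  have hq : ∀ n, 0 < p (n + 1) := fun n => hppos (n + 1) n.succ_pos
  have hX : Measurable X := hNmeas.sub_const 1
  have hW : AEMeasurable W P := aemeasurable_pi_lambda W fun n => (hL2 n).1.aemeasurable
  have hXW : IndepFun X W P := hindep.comp (measurable_of_countable (· - 1)) measurable_id
  have hg : ∀ n, Measurable (g n) := fun n => by fun_prop
  have hD : ∀ n, MemLp (fun ω => Z (n + 1) ω - Z n ω) 2 P := fun n => (hL2 (n + 1)).sub (hL2 n)
  have hq_sum : Summable fun n => p (n + 1) := by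
    simpa only [hfiber] using summable_measure_toReal (μ := P)
      (fun n => hX (measurableSet_singleton n)) (pairwise_disjoint_fiber X)
  rw [hY]
  have hY2 : MemLp (fun ω => g (X ω) (W ω)) 2 P :=
    memLp_two_comp_of_indepFun hX hW hXW hg
      (fun n => by simpa only [g, W, div_eq_mul_inv] using (hD n).mul_const (p (n + 1))⁻¹)
      (hsum.congr fun n => by
        simp only [hfiber, g, W, div_pow, integral_div]
        field_simp [(hq n).ne'])
  have hmean : HasSum (fun n => ∫ ω, (Z (n + 1) ω - Z n ω) ∂P) (∫ ω, g (X ω) (W ω) ∂P) :=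
    (hasSum_integral_comp_of_indepFun hX hW hXW hg (hY2.integrable one_le_two)).congr_fun
      fun n => by
        simp only [hfiber, g, W, integral_div]
        field_simp [(hq n).ne']
  refine ⟨hY2, hY2.integrable one_le_two,
    summable_abs_integral_of_summable_integral_sq_div hD hq hq_sum hsum, hmean.tsum_eq.symm, ?_⟩
  simpa only [hZ0, Pi.zero_apply, integral_zero, zero_add] using
    tendsto_integral_of_hasSum_integral_sub (fun n => (hL2 n).integrable one_le_two) hmean

/-- If each `Z n` is square integrable and `∑_{n≥1} E[(Z n − Z (n−1))²]/p n < ∞`, then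
the randomized estimator `Z̃ = (Z_N − Z_{N−1})/p_N` is square integrable (hence of finite
variance), integrable, the series `∑_{n≥1} E[Z n − Z (n−1)]` converges absolutely, and
`E[Z̃] = ∑_{n≥1} E[Z n − Z (n−1)] = lim_n E[Z n]`. -/
theorem randomized_estimator_finite_variance_unbiased {Ω : Type*} [MeasurableSpace Ω]
    (P : Measure Ω) [IsProbabilityMeasure P] (Z : ℕ → Ω → ℝ) (N : Ω → ℕ) (p : ℕ → ℝ)
    (hZ0 : Z 0 = 0)
    (hZmeas : ∀ n, Measurable (Z n))
    (hL2 : ∀ n, MemLp (Z n) 2 P)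
    (hNmeas : Measurable N)
    (hN1 : ∀ ω, 1 ≤ N ω)
    (hp : ∀ n, p n = (P {ω | N ω = n}).toReal)
    (hppos : ∀ n, 1 ≤ n → 0 < p n)
    (hindep : ProbabilityTheory.IndepFun N (fun ω => fun n => Z n ω) P)
    (hsum : Summable fun n : ℕ => (∫ ω, (Z (n + 1) ω - Z n ω) ^ 2 ∂P) / p (n + 1)) :
    MemLp (fun ω => (Z (N ω) ω - Z (N ω - 1) ω) / p (N ω)) 2 P ∧
      Integrable (fun ω => (Z (N ω) ω - Z (N ω - 1) ω) / p (N ω)) P ∧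
      (Summable fun n : ℕ => |∫ ω, (Z (n + 1) ω - Z n ω) ∂P|) ∧
      (∫ ω, (Z (N ω) ω - Z (N ω - 1) ω) / p (N ω) ∂P)
        = ∑' n : ℕ, ∫ ω, (Z (n + 1) ω - Z n ω) ∂P ∧
      Tendsto (fun n => ∫ ω, Z n ω ∂P) atTop
        (𝓝 (∫ ω, (Z (N ω) ω - Z (N ω - 1) ω) / p (N ω) ∂P)) :=
  randomized_estimator_finite_variance_unbiased_general P Z N p hZ0 hL2 hNmeas hN1 hp hppos hindep
    hsum
end

section
/- Let d ≥ 2 be an integer. There exists no sequence (p_n)_{n≥1} of strictly positive real numbers such that both Σ_{n≥1} 2^{−2n}/p_n < ∞ and Σ_{n≥1} n · 2^{dn} · p_n < ∞. (Consequently, when the level-difference second moments decay like 2^{−2n}, as for piecewise linear finite elements, and the level-n cost grows like n·2^{dn}, no randomization distribution yields a randomized multilevel estimator with both finite variance and finite expected computational cost in dimension d ≥ 2.) -/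
/-! The `p n` cancel in the product of the `n`-th terms of the two series, leaving
`n · 2^{(d-2)n} ≥ 1`; but terms of convergent series tend to `0`. -/

open Filter

theorem not_eventually_one_le_mul_of_summable {f g : ℕ → ℝ} (hf : Summable f)
    (hg : Summable g) : ¬ ∀ᶠ n in atTop, 1 ≤ f n * g n := fun h => by
  have hfg : Tendsto (fun n => f n * g n) atTop (nhds 0) := by
    simpa using hf.tendsto_atTop_zero.mul hg.tendsto_atTop_zero
  exact absurd (ge_of_tendsto hfg h) (by norm_num)

theorem two_rpow_neg_two_mul_mul_two_pow {d : ℕ} (hd : 2 ≤ d) (m : ℕ) :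
    (2 : ℝ) ^ (-(2 * (m : ℝ))) * 2 ^ (d * m) = 2 ^ ((d - 2) * m) := by
  obtain ⟨k, rfl⟩ := Nat.exists_eq_add_of_le hd
  rw [Nat.add_sub_cancel_left, add_mul, pow_add, ← mul_assoc, ← Real.rpow_natCast 2 (2 * m),
    ← Real.rpow_add two_pos]
  push_cast
  simp

/-- In dimension `d ≥ 2`, no randomization distribution `(p n)` can make the
randomized multilevel estimator based on piecewise linear finite elements have
both finite variance (`∑_{n≥1} 2^{-2n}/p n < ∞`) and finite expected cost
(`∑_{n≥1} n · 2^{dn} · p n < ∞`). -/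
theorem no_distribution_linear_fem (d : ℕ) (hd : 2 ≤ d) :
    ¬ ∃ p : ℕ → ℝ,
        (∀ n : ℕ, 1 ≤ n → 0 < p n) ∧
        (Summable fun n : ℕ => (2 : ℝ) ^ (-(2 * ((n : ℝ) + 1))) / p (n + 1)) ∧
        (Summable fun n : ℕ => ((n : ℝ) + 1) * (2 : ℝ) ^ (d * (n + 1)) * p (n + 1)) := by
  rintro ⟨p, hp, hvariance, hcost⟩
  refine not_eventually_one_le_mul_of_summable hvariance hcost (.of_forall fun n => ?_)
  have hpn : p (n + 1) ≠ 0 := (hp (n + 1) n.succ_pos).ne'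
  have hexp := two_rpow_neg_two_mul_mul_two_pow hd (n + 1)
  push_cast at hexp
  calc (1 : ℝ) ≤ ((n : ℝ) + 1) * 2 ^ ((d - 2) * (n + 1)) :=
        one_le_mul_of_one_le_of_one_le (by simp) (one_le_pow₀ one_le_two)
    _ = _ := by
        rw [← hexp]
        field_simp
end
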